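/- arXiv:math/0703181 — 5 statements merged into one kernel-verified Lean document; each statement's English description precedes it below -/
import Mathlib

section
/- Let N₁ = E₂₃. The set {X ∈ sp(4,ℂ) : N₁·X − X·N₁ = 0} is exactly the ℂ-linear span of the six matrices diag(1,0,0,−1), L_{2e1}, L_{e1+e2}, L_{2e2}, L_{−e1+e2}, L_{−2e1}, and this subspace has dimension 6 over ℂ. -/
open Matrix

/-- The matrix `J` defining the symplectic form. -/
def J4 : Matrix (Fin 4) (Fin 4) ℂ :=
  !![0,0,0,1; 0,0,1,0; 0,-1,0,0; -1,0,0,0]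

/-- The set `sp(4,ℂ) = {X : Xᵀ·J + J·X = 0}`. -/
def sp4 : Set (Matrix (Fin 4) (Fin 4) ℂ) :=
  {X | Xᵀ * J4 + J4 * X = 0}

/-- `L_{e1−e2} = E₁₂ − E₃₄`. -/
def Le1me2 : Matrix (Fin 4) (Fin 4) ℂ := !![0,1,0,0; 0,0,0,0; 0,0,0,-1; 0,0,0,0]

/-- `L_{−e1+e2} = E₂₁ − E₄₃`. -/
def Lme1pe2 : Matrix (Fin 4) (Fin 4) ℂ := !![0,0,0,0; 1,0,0,0; 0,0,0,0; 0,0,-1,0]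

/-- `L_{e1+e2} = E₁₃ + E₂₄`. -/
def Le1pe2 : Matrix (Fin 4) (Fin 4) ℂ := !![0,0,1,0; 0,0,0,1; 0,0,0,0; 0,0,0,0]

/-- `L_{−e1−e2} = E₃₁ + E₄₂`. -/
def Lme1me2 : Matrix (Fin 4) (Fin 4) ℂ := !![0,0,0,0; 0,0,0,0; 1,0,0,0; 0,1,0,0]

/-- `L_{2e1} = E₁₄`. -/
def L2e1 : Matrix (Fin 4) (Fin 4) ℂ := !![0,0,0,1; 0,0,0,0; 0,0,0,0; 0,0,0,0]

/-- `L_{−2e1} = E₄₁`. -/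
def Lm2e1 : Matrix (Fin 4) (Fin 4) ℂ := !![0,0,0,0; 0,0,0,0; 0,0,0,0; 1,0,0,0]

/-- `L_{2e2} = E₂₃`. -/
def L2e2 : Matrix (Fin 4) (Fin 4) ℂ := !![0,0,0,0; 0,0,1,0; 0,0,0,0; 0,0,0,0]

/-- `L_{−2e2} = E₃₂`. -/
def Lm2e2 : Matrix (Fin 4) (Fin 4) ℂ := !![0,0,0,0; 0,0,0,0; 0,1,0,0; 0,0,0,0]

/-- `diag(1,0,0,−1)`. -/
def D1 : Matrix (Fin 4) (Fin 4) ℂ := !![1,0,0,0; 0,0,0,0; 0,0,0,0; 0,0,0,-1]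

set_option maxHeartbeats 1000000 in
private lemma aux_sp4 : D1 ∈ sp4 ∧ L2e1 ∈ sp4 ∧ Le1pe2 ∈ sp4 ∧ L2e2 ∈ sp4 ∧
    Lme1pe2 ∈ sp4 ∧ Lm2e1 ∈ sp4 := by
  refine ⟨?_, ?_, ?_, ?_, ?_, ?_⟩ <;>
    · show _ᵀ * J4 + J4 * _ = 0
      ext i j
      fin_cases i <;> fin_cases j <;>
        simp [D1, L2e1, Le1pe2, L2e2, Lme1pe2, Lm2e1, J4, Matrix.mul_apply,
          Matrix.transpose_apply, Matrix.vecHead, Matrix.vecTail, Fin.sum_univ_four]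

set_option maxHeartbeats 1000000 in
private lemma aux_comm :
    ∀ x ∈ ({D1, L2e1, Le1pe2, L2e2, Lme1pe2, Lm2e1} : Set (Matrix (Fin 4) (Fin 4) ℂ)),
    !![0,0,0,0; 0,0,(1:ℂ),0; 0,0,0,0; 0,0,0,0] * x -
      x * !![0,0,0,0; 0,0,(1:ℂ),0; 0,0,0,0; 0,0,0,0] = 0 := by
  intro x hx
  rcases hx with rfl | rfl | rfl | rfl | rfl | rfl <;>
    · ext i j
      fin_cases i <;> fin_cases j <;>
        simp [D1, L2e1, Le1pe2, L2e2, Lme1pe2, Lm2e1, Matrix.mul_apply,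
          Matrix.vecHead, Matrix.vecTail, Fin.sum_univ_four]

set_option maxHeartbeats 1000000 in
private lemma aux_li : LinearIndependent ℂ ![D1, L2e1, Le1pe2, L2e2, Lme1pe2, Lm2e1] := by
  rw [Fintype.linearIndependent_iff]
  intro g hg i
  rw [Fin.sum_univ_six] at hg
  have hg' : g 0 • D1 + g 1 • L2e1 + g 2 • Le1pe2 + g 3 • L2e2 + g 4 • Lme1pe2 +
      g 5 • Lm2e1 = 0 := hg
  clear hg
  rename' hg' => hg
  have e0 := congrFun (congrFun hg 0) 0
  have e1 := congrFun (congrFun hg 0) 3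
  have e2 := congrFun (congrFun hg 0) 2
  have e3 := congrFun (congrFun hg 1) 2
  have e4 := congrFun (congrFun hg 1) 0
  have e5 := congrFun (congrFun hg 3) 0
  simp [D1, L2e1, Le1pe2, L2e2, Lme1pe2, Lm2e1, Matrix.vecHead, Matrix.vecTail] at e0 e1 e2 e3 e4 e5
  fin_cases i <;> assumption

set_option maxHeartbeats 1000000 in
/-- The centralizer of `N₁ = E₂₃` in `sp(4,ℂ)` is the 6-dimensional span of
`diag(1,0,0,−1)`, `L_{2e1}`, `L_{e1+e2}`, `L_{2e2}`, `L_{−e1+e2}`, `L_{−2e1}`. -/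
theorem stmt5 :
    let N₁ : Matrix (Fin 4) (Fin 4) ℂ := !![0,0,0,0; 0,0,1,0; 0,0,0,0; 0,0,0,0]
    {X | X ∈ sp4 ∧ N₁ * X - X * N₁ = 0} =
      ↑(Submodule.span ℂ
        ({D1, L2e1, Le1pe2, L2e2, Lme1pe2, Lm2e1} : Set (Matrix (Fin 4) (Fin 4) ℂ))) ∧
    Module.finrank ℂ ↥(Submodule.span ℂ
        ({D1, L2e1, Le1pe2, L2e2, Lme1pe2, Lm2e1} : Set (Matrix (Fin 4) (Fin 4) ℂ))) = 6 := by

  intro N₁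
  have key : {X | X ∈ sp4 ∧ N₁ * X - X * N₁ = 0} =
      ↑(Submodule.span ℂ
        ({D1, L2e1, Le1pe2, L2e2, Lme1pe2, Lm2e1} : Set (Matrix (Fin 4) (Fin 4) ℂ))) := by
    ext X
    simp only [Set.mem_setOf_eq, SetLike.mem_coe, sp4]
    constructor
    · rintro ⟨hs, hc'⟩
      have hc : !![0,0,0,0; 0,0,(1:ℂ),0; 0,0,0,0; 0,0,0,0] * X -
          X * !![0,0,0,0; 0,0,(1:ℂ),0; 0,0,0,0; 0,0,0,0] = 0 := hc'
      have h02 := congrFun (congrFun hs 0) 2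
      have h03 := congrFun (congrFun hs 0) 3
      have h12 := congrFun (congrFun hs 1) 2
      have h23 := congrFun (congrFun hs 2) 3
      have c10 := congrFun (congrFun hc 1) 0
      have c11 := congrFun (congrFun hc 1) 1
      have c12 := congrFun (congrFun hc 1) 2
      have c13 := congrFun (congrFun hc 1) 3
      have c02 := congrFun (congrFun hc 0) 2
      have c32 := congrFun (congrFun hc 3) 2
      simp only [J4, Matrix.mul_apply, Matrix.sub_apply, Matrix.add_apply,
        Matrix.transpose_apply, Matrix.zero_apply, Fin.sum_univ_four, Matrix.cons_val_zero,
        Matrix.cons_val_one, Matrix.cons_val_two, Matrix.cons_val_three, Matrix.head_cons,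
        Matrix.tail_cons, Matrix.of_apply, Matrix.cons_val', zero_mul, mul_zero, one_mul,
        mul_one, neg_mul, zero_add, add_zero, neg_zero, sub_zero, zero_sub,
        mul_neg] at h02 h03 h12 h23 c10 c11 c12 c13 c02 c32
      have hX : X = X 0 0 • D1 + X 0 3 • L2e1 + X 0 2 • Le1pe2 + X 1 2 • L2e2 +
          X 1 0 • Lme1pe2 + X 3 0 • Lm2e1 := by
        ext i j
        fin_cases i <;> fin_cases j <;>
          simp [D1, L2e1, Le1pe2, L2e2, Lme1pe2, Lm2e1, Matrix.add_apply,
            Matrix.smul_apply, Matrix.vecHead, Matrix.vecTail] <;>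
          first
            | ring1
            | linear_combination c02
            | linear_combination -c02
            | linear_combination (h12 - c12) / 2
            | linear_combination (c12 - h12) / 2
            | linear_combination (h12 + c12) / 2
            | linear_combination -(h12 + c12) / 2
            | linear_combination h23
            | linear_combination -h23
            | linear_combination c10
            | linear_combination -c10
            | linear_combination c11
            | linear_combination -c11
            | linear_combination c13
            | linear_combination -c13
            | linear_combination c32
            | linear_combination -c32
            | linear_combination h02
            | linear_combination -h02
            | linear_combination h03
            | linear_combination -h03
      rw [hX]
      have m1 : D1 ∈ ({D1, L2e1, Le1pe2, L2e2, Lme1pe2, Lm2e1} :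
          Set (Matrix (Fin 4) (Fin 4) ℂ)) := by simp
      have m2 : L2e1 ∈ ({D1, L2e1, Le1pe2, L2e2, Lme1pe2, Lm2e1} :
          Set (Matrix (Fin 4) (Fin 4) ℂ)) := by simp
      have m3 : Le1pe2 ∈ ({D1, L2e1, Le1pe2, L2e2, Lme1pe2, Lm2e1} :
          Set (Matrix (Fin 4) (Fin 4) ℂ)) := by simp
      have m4 : L2e2 ∈ ({D1, L2e1, Le1pe2, L2e2, Lme1pe2, Lm2e1} :
          Set (Matrix (Fin 4) (Fin 4) ℂ)) := by simp
      have m5 : Lme1pe2 ∈ ({D1, L2e1, Le1pe2, L2e2, Lme1pe2, Lm2e1} :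
          Set (Matrix (Fin 4) (Fin 4) ℂ)) := by simp
      have m6 : Lm2e1 ∈ ({D1, L2e1, Le1pe2, L2e2, Lme1pe2, Lm2e1} :
          Set (Matrix (Fin 4) (Fin 4) ℂ)) := by simp
      exact Submodule.add_mem _ (Submodule.add_mem _ (Submodule.add_mem _
        (Submodule.add_mem _ (Submodule.add_mem _
          (Submodule.smul_mem _ _ (Submodule.subset_span m1))
          (Submodule.smul_mem _ _ (Submodule.subset_span m2)))
          (Submodule.smul_mem _ _ (Submodule.subset_span m3)))
          (Submodule.smul_mem _ _ (Submodule.subset_span m4)))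
          (Submodule.smul_mem _ _ (Submodule.subset_span m5)))
          (Submodule.smul_mem _ _ (Submodule.subset_span m6))
    · intro hX
      induction hX using Submodule.span_induction with
      | mem x hx =>
        refine ⟨?_, aux_comm x hx⟩
        rcases hx with rfl | rfl | rfl | rfl | rfl | rfl
        exacts [aux_sp4.1, aux_sp4.2.1, aux_sp4.2.2.1, aux_sp4.2.2.2.1,
          aux_sp4.2.2.2.2.1, aux_sp4.2.2.2.2.2]
      | zero => exact ⟨by simp, by simp⟩
      | add x y _ _ hx hy =>
        constructor
        · have := congrArg₂ (· + ·) hx.1 hy.1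
          simp only [Matrix.transpose_add, add_mul, mul_add, add_zero] at this ⊢
          rw [← this]; abel
        · have := congrArg₂ (· + ·) hx.2 hy.2
          simp only [add_mul, mul_add, add_zero] at this ⊢
          rw [← this]; abel
      | smul c x _ hx =>
        constructor
        · rw [Matrix.transpose_smul, Matrix.smul_mul, Matrix.mul_smul, ← smul_add, hx.1,
            smul_zero]
        · rw [Matrix.smul_mul, Matrix.mul_smul, ← smul_sub, hx.2, smul_zero]
  refine ⟨key, ?_⟩
  have hrange : Set.range ![D1, L2e1, Le1pe2, L2e2, Lme1pe2, Lm2e1] =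
      ({D1, L2e1, Le1pe2, L2e2, Lme1pe2, Lm2e1} : Set (Matrix (Fin 4) (Fin 4) ℂ)) := by
    simp only [Matrix.range_cons, Matrix.range_empty, Set.union_empty,
      Set.union_singleton, insert_empty_eq]
    ext x
    simp only [Set.mem_insert_iff, Set.mem_singleton_iff, Set.mem_union]
    tauto
  have hli := aux_li
  rw [← hrange, finrank_span_eq_card hli]
  simp
end

section
/- Let N₂ = E₁₄. The set {X ∈ sp(4,ℂ) : N₂·X − X·N₂ = 0} is exactly the ℂ-linear span of the six matrices diag(0,1,−1,0), L_{2e1}, L_{e1+e2}, L_{2e2}, L_{−2e2}, L_{e1−e2}, and this subspace has dimension 6 over ℂ. -/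
open Matrix

/-- `diag(0,1,−1,0)`. -/
def D2 : Matrix (Fin 4) (Fin 4) ℂ := !![0,0,0,0; 0,1,0,0; 0,0,-1,0; 0,0,0,0]

/-! Since `N₂ = E₁₄ = L_{2e1}`, the set in question is the centralizer of `L2e1` among the
`J4`-skew-adjoint matrices. Both defining conditions are linear and impose ten independent equations
on the sixteen entries of `X`; the free entries `X₁₁, X₀₃, X₀₂, X₁₂, X₂₁, X₀₁` are exactly the
coefficients of `X` on the six listed matrices, which therefore form a basis. -/

section SkewAdjointCentralizer

variable {n R : Type*} [Fintype n] [DecidableEq n] [CommRing R]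

theorem mem_skewAdjointMatricesSubmodule_iff {J A : Matrix n n R} :
    A ∈ skewAdjointMatricesSubmodule J ↔ Aᵀ * J + J * A = 0 := by
  rw [mem_skewAdjointMatricesSubmodule, Matrix.IsSkewAdjoint, Matrix.IsAdjointPair,
    Matrix.mul_neg, ← add_eq_zero_iff_eq_neg]

def skewAdjointCentralizer (J N : Matrix n n R) : Submodule R (Matrix n n R) :=
  skewAdjointMatricesSubmodule J ⊓ Subalgebra.toSubmodule (Subalgebra.centralizer R {N})

theorem mem_skewAdjointCentralizer {J N X : Matrix n n R} :
    X ∈ skewAdjointCentralizer J N ↔ Xᵀ * J + J * X = 0 ∧ N * X - X * N = 0 := by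
  simp only [skewAdjointCentralizer, Submodule.mem_inf, mem_skewAdjointMatricesSubmodule_iff,
    Subalgebra.mem_toSubmodule, Subalgebra.mem_centralizer_iff, Set.mem_singleton_iff, forall_eq,
    sub_eq_zero]

end SkewAdjointCentralizer

def sp4CentralizerGens : Fin 6 → Matrix (Fin 4) (Fin 4) ℂ :=
  ![D2, L2e1, Le1pe2, L2e2, Lm2e2, Le1me2]

def sp4CentralizerCoords : Matrix (Fin 4) (Fin 4) ℂ →ₗ[ℂ] Fin 6 → ℂ :=
  LinearMap.pi ![entryLinearMap ℂ ℂ 1 1, entryLinearMap ℂ ℂ 0 3, entryLinearMap ℂ ℂ 0 2,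
    entryLinearMap ℂ ℂ 1 2, entryLinearMap ℂ ℂ 2 1, entryLinearMap ℂ ℂ 0 1]

theorem range_sp4CentralizerGens :
    Set.range sp4CentralizerGens = {D2, L2e1, Le1pe2, L2e2, Lm2e2, Le1me2} := by
  simp only [sp4CentralizerGens, Matrix.range_cons, Matrix.range_empty, Set.union_empty,
    Set.singleton_union]

theorem sp4CentralizerCoords_gens (i : Fin 6) :
    sp4CentralizerCoords (sp4CentralizerGens i) = Pi.single i 1 := by
  ext j
  fin_cases i <;> fin_cases j <;> rfl

theorem linearIndependent_sp4CentralizerGens : LinearIndependent ℂ sp4CentralizerGens :=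
  LinearIndependent.of_comp sp4CentralizerCoords <| by
    convert (Pi.basisFun ℂ (Fin 6)).linearIndependent
    funext i
    rw [Function.comp_apply, sp4CentralizerCoords_gens, Pi.basisFun_apply]

theorem sp4CentralizerGens_mem (i : Fin 6) :
    sp4CentralizerGens i ∈ skewAdjointCentralizer J4 L2e1 := by
  rw [mem_skewAdjointCentralizer]
  fin_cases i <;>
    simp [sp4CentralizerGens, D2, L2e1, Le1pe2, L2e2, Lm2e2, Le1me2, J4, ← Matrix.ext_iff,
      Fin.forall_fin_succ, Matrix.mul_apply, Fin.sum_univ_four]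

theorem eq_sum_sp4CentralizerCoords_smul {X : Matrix (Fin 4) (Fin 4) ℂ}
    (hX : X ∈ skewAdjointCentralizer J4 L2e1) :
    X = ∑ i, sp4CentralizerCoords X i • sp4CentralizerGens i := by
  obtain ⟨hJ, hN⟩ := mem_skewAdjointCentralizer.1 hX
  have hJ' := congrFun₂ hJ
  have hN' := congrFun₂ hN
  simp only [Matrix.add_apply, Matrix.sub_apply, Matrix.mul_apply, Fin.sum_univ_four,
    Matrix.transpose_apply, Matrix.zero_apply] at hJ' hN'
  simp only [Fin.isValue, J4, L2e1, of_apply, cons_val', cons_val_fin_one, cons_val_zero,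
    cons_val_one, cons_val, Fin.forall_fin_succ, mul_zero, add_zero, mul_neg, mul_one, zero_add,
    cons_val_succ, Fin.succ_zero_eq_one, Fin.succ_one_eq_two, Fin.reduceSucc, IsEmpty.forall_iff,
    and_true, zero_mul, one_mul, neg_add_cancel, true_and, neg_mul, add_neg_cancel, sub_zero,
    zero_sub, neg_eq_zero] at hJ' hN'
  ext i j
  fin_cases i <;> fin_cases j <;>
    simp [Fin.sum_univ_six, sp4CentralizerCoords, sp4CentralizerGens, D2, L2e1, Le1pe2, L2e2,
      Lm2e2, Le1me2] <;>
    grind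

theorem span_sp4CentralizerGens :
    Submodule.span ℂ (Set.range sp4CentralizerGens) = skewAdjointCentralizer J4 L2e1 :=
  le_antisymm (Submodule.span_le.2 (Set.range_subset_iff.2 sp4CentralizerGens_mem)) fun _ hX =>
    (Submodule.mem_span_range_iff_exists_fun ℂ).2 ⟨_, (eq_sum_sp4CentralizerCoords_smul hX).symm⟩

/-- The centralizer of `N₂ = E₁₄` in `sp(4,ℂ)` is the 6-dimensional span of
`diag(0,1,−1,0)`, `L_{2e1}`, `L_{e1+e2}`, `L_{2e2}`, `L_{−2e2}`, `L_{e1−e2}`. -/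
theorem stmt6 :
    let N₂ : Matrix (Fin 4) (Fin 4) ℂ := !![0,0,0,1; 0,0,0,0; 0,0,0,0; 0,0,0,0]
    {X | X ∈ sp4 ∧ N₂ * X - X * N₂ = 0} =
      ↑(Submodule.span ℂ
        ({D2, L2e1, Le1pe2, L2e2, Lm2e2, Le1me2} : Set (Matrix (Fin 4) (Fin 4) ℂ))) ∧
    Module.finrank ℂ ↥(Submodule.span ℂ
        ({D2, L2e1, Le1pe2, L2e2, Lm2e2, Le1me2} : Set (Matrix (Fin 4) (Fin 4) ℂ))) = 6 := by
  intro N₂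
  rw [← range_sp4CentralizerGens]
  refine ⟨?_, ?_⟩
  · rw [span_sp4CentralizerGens]
    exact Set.ext fun X => mem_skewAdjointCentralizer.symm
  · rw [finrank_span_eq_card linearIndependent_sp4CentralizerGens, Fintype.card_fin]
end

section
/- Let A be an invertible 2×2 complex matrix, let x ∈ ℂ be nonzero, let A' = w·(Aᵀ)⁻¹·w, and let m be the 4×4 block-diagonal matrix [[x·A', 0],[0, A]]. Then mᵀ·J·m = x·J (so m ∈ GSp(4,ℂ)), and conjugation X ↦ m·X·m⁻¹ maps each of the following four subspaces of sp(4,ℂ) into itself: (i) ℂ·diag(1,1,−1,−1), on which it acts as the identity; (ii) the span of L_{−e1+e2}, diag(1,−1,1,−1), L_{e1−e2}; (iii) the span of L_{2e2}, L_{e1+e2}, L_{2e1}; (iv) the span of L_{−2e1}, L_{−e1−e2}, L_{−2e2}. Moreover, sp(4,ℂ) is the internal direct sum of these four subspaces. -/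
open Matrix
set_option maxHeartbeats 1600000

/-- The 2×2 matrix `w = [[0,1],[1,0]]`. -/
def w2 : Matrix (Fin 2) (Fin 2) ℂ := !![0,1; 1,0]

/-- `diag(1,1,−1,−1)`. -/
def Dpp : Matrix (Fin 4) (Fin 4) ℂ := !![1,0,0,0; 0,1,0,0; 0,0,-1,0; 0,0,0,-1]

/-- `diag(1,−1,1,−1)`. -/
def Dpm : Matrix (Fin 4) (Fin 4) ℂ := !![1,0,0,0; 0,-1,0,0; 0,0,1,0; 0,0,0,-1]

/- auxiliary material -/


lemma smul4 (t : ℂ) (a00 a01 a02 a03 a10 a11 a12 a13 a20 a21 a22 a23 a30 a31 a32 a33 : ℂ) :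
    t • !![a00, a01, a02, a03; a10, a11, a12, a13; a20, a21, a22, a23; a30, a31, a32, a33] =
    !![t*a00, t*a01, t*a02, t*a03; t*a10, t*a11, t*a12, t*a13; t*a20, t*a21, t*a22, t*a23; t*a30, t*a31, t*a32, t*a33] := by
  ext i j; fin_cases i <;> fin_cases j <;> simp

lemma add4 (a00 a01 a02 a03 a10 a11 a12 a13 a20 a21 a22 a23 a30 a31 a32 a33 b00 b01 b02 b03 b10 b11 b12 b13 b20 b21 b22 b23 b30 b31 b32 b33 : ℂ) :
    !![a00, a01, a02, a03; a10, a11, a12, a13; a20, a21, a22, a23; a30, a31, a32, a33] + !![b00, b01, b02, b03; b10, b11, b12, b13; b20, b21, b22, b23; b30, b31, b32, b33] =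
    !![a00+b00, a01+b01, a02+b02, a03+b03; a10+b10, a11+b11, a12+b12, a13+b13; a20+b20, a21+b21, a22+b22, a23+b23; a30+b30, a31+b31, a32+b32, a33+b33] := by
  ext i j; fin_cases i <;> fin_cases j <;> simp

lemma mul4 (a00 a01 a02 a03 a10 a11 a12 a13 a20 a21 a22 a23 a30 a31 a32 a33 b00 b01 b02 b03 b10 b11 b12 b13 b20 b21 b22 b23 b30 b31 b32 b33 : ℂ) :
    !![a00, a01, a02, a03; a10, a11, a12, a13; a20, a21, a22, a23; a30, a31, a32, a33] * !![b00, b01, b02, b03; b10, b11, b12, b13; b20, b21, b22, b23; b30, b31, b32, b33] =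
    !![a00*b00+a01*b10+a02*b20+a03*b30, a00*b01+a01*b11+a02*b21+a03*b31, a00*b02+a01*b12+a02*b22+a03*b32, a00*b03+a01*b13+a02*b23+a03*b33; a10*b00+a11*b10+a12*b20+a13*b30, a10*b01+a11*b11+a12*b21+a13*b31, a10*b02+a11*b12+a12*b22+a13*b32, a10*b03+a11*b13+a12*b23+a13*b33; a20*b00+a21*b10+a22*b20+a23*b30, a20*b01+a21*b11+a22*b21+a23*b31, a20*b02+a21*b12+a22*b22+a23*b32, a20*b03+a21*b13+a22*b23+a23*b33; a30*b00+a31*b10+a32*b20+a33*b30, a30*b01+a31*b11+a32*b21+a33*b31, a30*b02+a31*b12+a32*b22+a33*b32, a30*b03+a31*b13+a32*b23+a33*b33] := by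
  ext i j; fin_cases i <;> fin_cases j <;> simp [Matrix.mul_apply, Fin.sum_univ_four]

lemma one4 : (1 : Matrix (Fin 4) (Fin 4) ℂ) = !![1,0,0,0; 0,1,0,0; 0,0,1,0; 0,0,0,1] := by
  ext i j; fin_cases i <;> fin_cases j <;> simp [Matrix.one_apply, Matrix.vecHead, Matrix.vecTail]

lemma transpose4 (a00 a01 a02 a03 a10 a11 a12 a13 a20 a21 a22 a23 a30 a31 a32 a33 : ℂ) :
    (!![a00, a01, a02, a03; a10, a11, a12, a13; a20, a21, a22, a23; a30, a31, a32, a33])ᵀ =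
    !![a00, a10, a20, a30; a01, a11, a21, a31; a02, a12, a22, a32; a03, a13, a23, a33] := by
  ext i j; fin_cases i <;> fin_cases j <;> rfl

lemma eq4 (a00 a01 a02 a03 a10 a11 a12 a13 a20 a21 a22 a23 a30 a31 a32 a33 b00 b01 b02 b03 b10 b11 b12 b13 b20 b21 b22 b23 b30 b31 b32 b33 : ℂ) :
    !![a00, a01, a02, a03; a10, a11, a12, a13; a20, a21, a22, a23; a30, a31, a32, a33] = !![b00, b01, b02, b03; b10, b11, b12, b13; b20, b21, b22, b23; b30, b31, b32, b33] ↔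
    (a00 = b00 ∧ a01 = b01 ∧ a02 = b02 ∧ a03 = b03 ∧ a10 = b10 ∧ a11 = b11 ∧ a12 = b12 ∧ a13 = b13 ∧ a20 = b20 ∧ a21 = b21 ∧ a22 = b22 ∧ a23 = b23 ∧ a30 = b30 ∧ a31 = b31 ∧ a32 = b32 ∧ a33 = b33) := by
  constructor
  · intro h
    exact ⟨congrFun (congrFun h 0) 0, congrFun (congrFun h 0) 1, congrFun (congrFun h 0) 2, congrFun (congrFun h 0) 3, congrFun (congrFun h 1) 0, congrFun (congrFun h 1) 1, congrFun (congrFun h 1) 2, congrFun (congrFun h 1) 3, congrFun (congrFun h 2) 0, congrFun (congrFun h 2) 1, congrFun (congrFun h 2) 2, congrFun (congrFun h 2) 3, congrFun (congrFun h 3) 0, congrFun (congrFun h 3) 1, congrFun (congrFun h 3) 2, congrFun (congrFun h 3) 3⟩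
  · rintro ⟨h00, h01, h02, h03, h10, h11, h12, h13, h20, h21, h22, h23, h30, h31, h32, h33⟩
    ext i j; fin_cases i <;> fin_cases j <;> simp [h00, h01, h02, h03, h10, h11, h12, h13, h20, h21, h22, h23, h30, h31, h32, h33]

lemma eta4 (X : Matrix (Fin 4) (Fin 4) ℂ) : X = !![X 0 0, X 0 1, X 0 2, X 0 3; X 1 0, X 1 1, X 1 2, X 1 3; X 2 0, X 2 1, X 2 2, X 2 3; X 3 0, X 3 1, X 3 2, X 3 3] := by
  ext i j; fin_cases i <;> fin_cases j <;> rfl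


lemma mem_sp4_iff (X : Matrix (Fin 4) (Fin 4) ℂ) :
    X ∈ sp4 ↔ X 3 3 = -X 0 0 ∧ X 2 2 = -X 1 1 ∧ X 3 1 = X 2 0 ∧
      X 3 2 = -X 1 0 ∧ X 2 3 = -X 0 1 ∧ X 1 3 = X 0 2 := by
  show Xᵀ * J4 + J4 * X = 0 ↔ _
  rw [← Matrix.ext_iff]
  constructor
  · intro h
    have h03 := h 0 3; have h12 := h 1 2; have h01 := h 0 1
    have h02 := h 0 2; have h13 := h 1 3; have h23 := h 2 3
    simp [J4, Matrix.mul_apply, Fin.sum_univ_four, Matrix.vecHead, Matrix.vecTail,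
      Matrix.vecMul, dotProduct] at h03 h12 h01 h02 h13 h23
    exact ⟨by linear_combination h03, by linear_combination h12, by linear_combination h01,
      by linear_combination h02, by linear_combination h13, by linear_combination -h23⟩
  · rintro ⟨h1, h2, h3, h4, h5, h6⟩ i j
    fin_cases i <;> fin_cases j <;>
      simp [J4, Matrix.mul_apply, Fin.sum_univ_four, Matrix.vecHead, Matrix.vecTail,
        Matrix.vecMul, dotProduct, h1, h2, h3, h4, h5, h6]

/-- `sp4` as a submodule. -/
noncomputable def sp4M : Submodule ℂ (Matrix (Fin 4) (Fin 4) ℂ) where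
  carrier := sp4
  add_mem' := by
    intro X Y hX hY
    show (X + Y)ᵀ * J4 + J4 * (X + Y) = 0
    have hX' : Xᵀ * J4 + J4 * X = 0 := hX
    have hY' : Yᵀ * J4 + J4 * Y = 0 := hY
    rw [Matrix.transpose_add, Matrix.add_mul, Matrix.mul_add]
    calc Xᵀ * J4 + Yᵀ * J4 + (J4 * X + J4 * Y)
        = (Xᵀ * J4 + J4 * X) + (Yᵀ * J4 + J4 * Y) := by abel
      _ = 0 := by rw [hX', hY', add_zero]
  zero_mem' := by
    show (0 : Matrix (Fin 4) (Fin 4) ℂ)ᵀ * J4 + J4 * 0 = 0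
    simp
  smul_mem' := by
    intro t X hX
    show (t • X)ᵀ * J4 + J4 * (t • X) = 0
    have hX' : Xᵀ * J4 + J4 * X = 0 := hX
    rw [Matrix.transpose_smul, Matrix.smul_mul, Matrix.mul_smul, ← smul_add, hX', smul_zero]

lemma mem_sp4M (X : Matrix (Fin 4) (Fin 4) ℂ) : X ∈ sp4M ↔ X ∈ sp4 := Iff.rfl

lemma mem_span_triple {M : Type*} [AddCommGroup M] [Module ℂ M] {a b c x : M} :
    x ∈ Submodule.span ℂ {a, b, c} ↔ ∃ p q r : ℂ, x = p • a + q • b + r • c := by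
  simp only [Submodule.mem_span_insert, Submodule.mem_span_singleton]
  constructor
  · rintro ⟨p, _, ⟨q, _, ⟨r, rfl⟩, rfl⟩, rfl⟩
    exact ⟨p, q, r, by rw [add_assoc]⟩
  · rintro ⟨p, q, r, rfl⟩
    exact ⟨p, _, ⟨q, _, ⟨r, rfl⟩, rfl⟩, by rw [add_assoc]⟩

lemma triple_mem {M : Type*} [AddCommGroup M] [Module ℂ M] (a b c : M) (p q r : ℂ) :
    p • a + q • b + r • c ∈ Submodule.span ℂ {a, b, c} := by
  refine add_mem (add_mem ?_ ?_) ?_ <;>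
    exact Submodule.smul_mem _ _ (Submodule.subset_span (by simp))

lemma reindex_blocks (p00 p01 p10 p11 q00 q01 q10 q11 : ℂ) :
    Matrix.reindex finSumFinEquiv finSumFinEquiv
      (Matrix.fromBlocks !![p00,p01;p10,p11] 0 0 !![q00,q01;q10,q11]) =
    !![p00,p01,0,0; p10,p11,0,0; 0,0,q00,q01; 0,0,q10,q11] := by
  ext i j
  fin_cases i <;> fin_cases j <;> rfl

/-- evaluation of a matrix entry, as a linear map -/
def ev (i j : Fin 4) : Matrix (Fin 4) (Fin 4) ℂ →ₗ[ℂ] ℂ where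
  toFun X := X i j
  map_add' _ _ := rfl
  map_smul' _ _ := rfl

@[simp] lemma ev_apply (i j : Fin 4) (X : Matrix (Fin 4) (Fin 4) ℂ) : ev i j X = X i j := rfl


/-- Conjugation by an element `m = diag(x·A', A)` of the Siegel Levi preserves
the four listed subspaces of `sp(4,ℂ)`, acting trivially on the first, and
`sp(4,ℂ)` is their internal direct sum. -/
theorem stmt10 (A : Matrix (Fin 2) (Fin 2) ℂ) (hA : IsUnit A.det)
    (x : ℂ) (hx : x ≠ 0) :
    let A' : Matrix (Fin 2) (Fin 2) ℂ := w2 * (Aᵀ)⁻¹ * w2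
    let m : Matrix (Fin 4) (Fin 4) ℂ :=
      Matrix.reindex finSumFinEquiv finSumFinEquiv (Matrix.fromBlocks (x • A') 0 0 A)
    let V : Fin 4 → Submodule ℂ (Matrix (Fin 4) (Fin 4) ℂ) :=
      ![Submodule.span ℂ {Dpp},
        Submodule.span ℂ {Lme1pe2, Dpm, Le1me2},
        Submodule.span ℂ {L2e2, Le1pe2, L2e1},
        Submodule.span ℂ {Lm2e1, Lme1me2, Lm2e2}]
    mᵀ * J4 * m = x • J4 ∧
    (∀ X ∈ V 0, m * X * m⁻¹ = X) ∧
    (∀ i : Fin 4, ∀ X ∈ V i, m * X * m⁻¹ ∈ V i) ∧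
    iSupIndep V ∧
    (↑(⨆ i, V i) : Set (Matrix (Fin 4) (Fin 4) ℂ)) = sp4 := by
  intro A' m V
  obtain ⟨a, b, c, d, hAe⟩ : ∃ a b c d, A = !![a,b;c,d] :=
    ⟨A 0 0, A 0 1, A 1 0, A 1 1, Matrix.eta_fin_two A⟩
  have hδ : a * d - b * c ≠ 0 := by
    rw [hAe, Matrix.det_fin_two_of, isUnit_iff_ne_zero] at hA
    exact hA
  have hδ1 : a * d - c * b ≠ 0 := by rw [mul_comm c b]; exact hδ
  have hδ2 : d * a - c * b ≠ 0 := by rw [mul_comm c b, mul_comm d a]; exact hδ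
  have hδ3 : d * a - b * c ≠ 0 := by rw [mul_comm d a]; exact hδ
  have hAT : Aᵀ = !![a,c;b,d] := by
    rw [hAe]; ext i j; fin_cases i <;> fin_cases j <;> rfl
  have hATinv : (Aᵀ)⁻¹ = !![d/(a*d-b*c), -(c/(a*d-b*c)); -(b/(a*d-b*c)), a/(a*d-b*c)] := by
    apply Matrix.inv_eq_right_inv
    rw [hAT]
    ext i j
    fin_cases i <;> fin_cases j <;>
      simp [Matrix.mul_apply, Fin.sum_univ_two, Matrix.one_apply, Matrix.vecHead,
        Matrix.vecTail] <;> field_simp <;> ring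
  have hxA' : x • A' = !![x*a/(a*d-b*c), -(x*b)/(a*d-b*c);
      -(x*c)/(a*d-b*c), x*d/(a*d-b*c)] := by
    show x • (w2 * (Aᵀ)⁻¹ * w2) = _
    rw [hATinv]
    ext i j
    fin_cases i <;> fin_cases j <;>
      simp [w2, Matrix.mul_apply, Fin.sum_univ_two, Matrix.smul_apply, smul_eq_mul,
        Matrix.vecHead, Matrix.vecTail] <;> field_simp <;> ring
  have hm : m = !![x*a/(a*d-b*c), -(x*b)/(a*d-b*c), 0, 0;
      -(x*c)/(a*d-b*c), x*d/(a*d-b*c), 0, 0;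
      0, 0, a, b; 0, 0, c, d] := by
    show Matrix.reindex finSumFinEquiv finSumFinEquiv (Matrix.fromBlocks (x • A') 0 0 A) = _
    rw [hxA', hAe, reindex_blocks]
  have hmn : m * !![d/x, b/x, 0, 0; c/x, a/x, 0, 0;
      0, 0, d/(a*d-b*c), -(b/(a*d-b*c)); 0, 0, -(c/(a*d-b*c)), a/(a*d-b*c)] = 1 := by
    rw [hm, mul4, one4, eq4]
    refine ⟨?_,?_,?_,?_,?_,?_,?_,?_,?_,?_,?_,?_,?_,?_,?_,?_⟩ <;>
      field_simp <;> ring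
  have hminv : m⁻¹ = !![d/x, b/x, 0, 0; c/x, a/x, 0, 0;
      0, 0, d/(a*d-b*c), -(b/(a*d-b*c)); 0, 0, -(c/(a*d-b*c)), a/(a*d-b*c)] :=
    Matrix.inv_eq_right_inv hmn
  have hmm' : m * m⁻¹ = 1 := by rw [hminv]; exact hmn
  have key : ∀ (L C : Matrix (Fin 4) (Fin 4) ℂ), m * L = C * m → m * L * m⁻¹ = C := by
    intro L C h
    rw [h, mul_assoc, hmm', mul_one]
  have cDpp : m * Dpp * m⁻¹ = Dpp := by
    apply key
    rw [hm]
    simp only [Dpp]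
    rw [mul4, mul4, eq4]
    refine ⟨?_,?_,?_,?_,?_,?_,?_,?_,?_,?_,?_,?_,?_,?_,?_,?_⟩ <;> ring
  have c11 : m * Lme1pe2 * m⁻¹ =
      (d*d/(a*d-b*c)) • Lme1pe2 + (-(b*d)/(a*d-b*c)) • Dpm + (-(b*b)/(a*d-b*c)) • Le1me2 := by
    apply key
    rw [hm]
    simp only [Lme1pe2, Dpm, Le1me2]
    rw [smul4, smul4, smul4, add4, add4, mul4, mul4, eq4]
    refine ⟨?_,?_,?_,?_,?_,?_,?_,?_,?_,?_,?_,?_,?_,?_,?_,?_⟩ <;> field_simp <;> ring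
  have c12 : m * Dpm * m⁻¹ =
      (-(2*c*d)/(a*d-b*c)) • Lme1pe2 + ((a*d+b*c)/(a*d-b*c)) • Dpm
        + ((2*a*b)/(a*d-b*c)) • Le1me2 := by
    apply key
    rw [hm]
    simp only [Lme1pe2, Dpm, Le1me2]
    rw [smul4, smul4, smul4, add4, add4, mul4, mul4, eq4]
    refine ⟨?_,?_,?_,?_,?_,?_,?_,?_,?_,?_,?_,?_,?_,?_,?_,?_⟩ <;> field_simp <;> ring
  have c13 : m * Le1me2 * m⁻¹ =
      (-(c*c)/(a*d-b*c)) • Lme1pe2 + ((a*c)/(a*d-b*c)) • Dpm + ((a*a)/(a*d-b*c)) • Le1me2 := by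
    apply key
    rw [hm]
    simp only [Lme1pe2, Dpm, Le1me2]
    rw [smul4, smul4, smul4, add4, add4, mul4, mul4, eq4]
    refine ⟨?_,?_,?_,?_,?_,?_,?_,?_,?_,?_,?_,?_,?_,?_,?_,?_⟩ <;> field_simp <;> ring
  have c21 : m * L2e2 * m⁻¹ =
      (x*d*d/((a*d-b*c)*(a*d-b*c))) • L2e2 + (-(x*b*d)/((a*d-b*c)*(a*d-b*c))) • Le1pe2
        + (x*b*b/((a*d-b*c)*(a*d-b*c))) • L2e1 := by
    apply key
    rw [hm]
    simp only [L2e2, Le1pe2, L2e1]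
    rw [smul4, smul4, smul4, add4, add4, mul4, mul4, eq4]
    refine ⟨?_,?_,?_,?_,?_,?_,?_,?_,?_,?_,?_,?_,?_,?_,?_,?_⟩ <;> field_simp <;> ring
  have c22 : m * Le1pe2 * m⁻¹ =
      (-(2*x*c*d)/((a*d-b*c)*(a*d-b*c))) • L2e2 + (x*(a*d+b*c)/((a*d-b*c)*(a*d-b*c))) • Le1pe2
        + (-(2*x*a*b)/((a*d-b*c)*(a*d-b*c))) • L2e1 := by
    apply key
    rw [hm]
    simp only [L2e2, Le1pe2, L2e1]
    rw [smul4, smul4, smul4, add4, add4, mul4, mul4, eq4]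
    refine ⟨?_,?_,?_,?_,?_,?_,?_,?_,?_,?_,?_,?_,?_,?_,?_,?_⟩ <;> field_simp <;> ring
  have c23 : m * L2e1 * m⁻¹ =
      (x*c*c/((a*d-b*c)*(a*d-b*c))) • L2e2 + (-(x*a*c)/((a*d-b*c)*(a*d-b*c))) • Le1pe2
        + (x*a*a/((a*d-b*c)*(a*d-b*c))) • L2e1 := by
    apply key
    rw [hm]
    simp only [L2e2, Le1pe2, L2e1]
    rw [smul4, smul4, smul4, add4, add4, mul4, mul4, eq4]
    refine ⟨?_,?_,?_,?_,?_,?_,?_,?_,?_,?_,?_,?_,?_,?_,?_,?_⟩ <;> field_simp <;> ring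
  have c31 : m * Lm2e1 * m⁻¹ =
      (d*d/x) • Lm2e1 + ((b*d)/x) • Lme1me2 + (b*b/x) • Lm2e2 := by
    apply key
    rw [hm]
    simp only [Lm2e1, Lme1me2, Lm2e2]
    rw [smul4, smul4, smul4, add4, add4, mul4, mul4, eq4]
    refine ⟨?_,?_,?_,?_,?_,?_,?_,?_,?_,?_,?_,?_,?_,?_,?_,?_⟩ <;> field_simp <;> ring
  have c32 : m * Lme1me2 * m⁻¹ =
      ((2*c*d)/x) • Lm2e1 + ((a*d+b*c)/x) • Lme1me2 + ((2*a*b)/x) • Lm2e2 := by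
    apply key
    rw [hm]
    simp only [Lm2e1, Lme1me2, Lm2e2]
    rw [smul4, smul4, smul4, add4, add4, mul4, mul4, eq4]
    refine ⟨?_,?_,?_,?_,?_,?_,?_,?_,?_,?_,?_,?_,?_,?_,?_,?_⟩ <;> field_simp <;> ring
  have c33 : m * Lm2e2 * m⁻¹ =
      (c*c/x) • Lm2e1 + ((a*c)/x) • Lme1me2 + (a*a/x) • Lm2e2 := by
    apply key
    rw [hm]
    simp only [Lm2e1, Lme1me2, Lm2e2]
    rw [smul4, smul4, smul4, add4, add4, mul4, mul4, eq4]
    refine ⟨?_,?_,?_,?_,?_,?_,?_,?_,?_,?_,?_,?_,?_,?_,?_,?_⟩ <;> field_simp <;> ring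
  have hV0 : V 0 = Submodule.span ℂ {Dpp} := rfl
  have hV1 : V 1 = Submodule.span ℂ {Lme1pe2, Dpm, Le1me2} := rfl
  have hV2 : V 2 = Submodule.span ℂ {L2e2, Le1pe2, L2e1} := rfl
  have hV3 : V 3 = Submodule.span ℂ {Lm2e1, Lme1me2, Lm2e2} := rfl
  have part2 : ∀ X ∈ V 0, m * X * m⁻¹ = X := by
    intro X hX
    rw [hV0, Submodule.mem_span_singleton] at hX
    obtain ⟨t, rfl⟩ := hX
    rw [Matrix.mul_smul, Matrix.smul_mul, cDpp]
  have stab : ∀ (g1 g2 g3 : Matrix (Fin 4) (Fin 4) ℂ),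
      m * g1 * m⁻¹ ∈ Submodule.span ℂ {g1, g2, g3} →
      m * g2 * m⁻¹ ∈ Submodule.span ℂ {g1, g2, g3} →
      m * g3 * m⁻¹ ∈ Submodule.span ℂ {g1, g2, g3} →
      ∀ X ∈ Submodule.span ℂ {g1, g2, g3},
        m * X * m⁻¹ ∈ Submodule.span ℂ {g1, g2, g3} := by
    intro g1 g2 g3 h1 h2 h3 X hX
    rw [mem_span_triple] at hX
    obtain ⟨p, q, r, rfl⟩ := hX
    have e : m * (p • g1 + q • g2 + r • g3) * m⁻¹ =
        p • (m * g1 * m⁻¹) + q • (m * g2 * m⁻¹) + r • (m * g3 * m⁻¹) := by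
      simp only [Matrix.mul_add, Matrix.add_mul, Matrix.mul_smul, Matrix.smul_mul]
    rw [e]
    exact add_mem (add_mem (Submodule.smul_mem _ _ h1) (Submodule.smul_mem _ _ h2))
      (Submodule.smul_mem _ _ h3)
  refine ⟨?_, part2, ?_, ?_, ?_⟩
  · -- similitude property
    rw [hm]
    simp only [J4]
    rw [transpose4, mul4, mul4, smul4, eq4]
    refine ⟨?_,?_,?_,?_,?_,?_,?_,?_,?_,?_,?_,?_,?_,?_,?_,?_⟩ <;> field_simp <;> ring
  · -- each V i stable
    intro i X hX
    fin_cases i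
    · rw [part2 X hX]; exact hX
    · exact stab _ _ _ (c11 ▸ triple_mem _ _ _ _ _ _) (c12 ▸ triple_mem _ _ _ _ _ _)
        (c13 ▸ triple_mem _ _ _ _ _ _) X hX
    · exact stab _ _ _ (c21 ▸ triple_mem _ _ _ _ _ _) (c22 ▸ triple_mem _ _ _ _ _ _)
        (c23 ▸ triple_mem _ _ _ _ _ _) X hX
    · exact stab _ _ _ (c31 ▸ triple_mem _ _ _ _ _ _) (c32 ▸ triple_mem _ _ _ _ _ _)
        (c33 ▸ triple_mem _ _ _ _ _ _) X hX
  · -- independence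
    rw [iSupIndep_def]
    intro i
    fin_cases i
    · -- i = 0 : others are killed by X ↦ X 0 0 + X 1 1
      have hsup : (⨆ (j) (_ : j ≠ (0 : Fin 4)), V j) ≤ LinearMap.ker (ev 0 0 + ev 1 1) := by
        refine iSup_le fun j => iSup_le fun hj => ?_
        fin_cases j
        · exact absurd rfl hj
        · refine Submodule.span_le.mpr ?_
          rintro g hg
          simp only [Set.mem_insert_iff, Set.mem_singleton_iff] at hg
          rcases hg with rfl | rfl | rfl <;>
            simp [SetLike.mem_coe, LinearMap.mem_ker, Matrix.vecHead, Matrix.vecTail, Lme1pe2, Dpm, Le1me2]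
        · refine Submodule.span_le.mpr ?_
          rintro g hg
          simp only [Set.mem_insert_iff, Set.mem_singleton_iff] at hg
          rcases hg with rfl | rfl | rfl <;>
            simp [SetLike.mem_coe, LinearMap.mem_ker, Matrix.vecHead, Matrix.vecTail, L2e2, Le1pe2, L2e1]
        · refine Submodule.span_le.mpr ?_
          rintro g hg
          simp only [Set.mem_insert_iff, Set.mem_singleton_iff] at hg
          rcases hg with rfl | rfl | rfl <;>
            simp [SetLike.mem_coe, LinearMap.mem_ker, Matrix.vecHead, Matrix.vecTail, Lm2e1, Lme1me2, Lm2e2]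
      rw [Submodule.disjoint_def]
      intro X hX1 hX2
      have hk := hsup hX2
      replace hX1 : X ∈ Submodule.span ℂ {Dpp} := hX1
      rw [Submodule.mem_span_singleton] at hX1
      obtain ⟨t, rfl⟩ := hX1
      rw [LinearMap.mem_ker, LinearMap.add_apply] at hk
      simp only [ev_apply, Matrix.smul_apply, Dpp] at hk
      have ht : t = 0 := by simpa [Matrix.vecHead, Matrix.vecTail] using hk
      rw [ht, zero_smul]
    · -- i = 1
      have hsup : (⨆ (j) (_ : j ≠ (1 : Fin 4)), V j) ≤
          LinearMap.ker (ev 1 0) ⊓ LinearMap.ker (ev 0 1) ⊓ LinearMap.ker (ev 0 0 - ev 1 1) := by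
        refine iSup_le fun j => iSup_le fun hj => ?_
        fin_cases j
        · refine Submodule.span_le.mpr ?_
          rintro g hg
          simp only [Set.mem_singleton_iff] at hg
          subst hg
          simp [SetLike.mem_coe, Submodule.mem_inf, LinearMap.mem_ker, Matrix.vecHead, Matrix.vecTail, Dpp]
        · exact absurd rfl hj
        · refine Submodule.span_le.mpr ?_
          rintro g hg
          simp only [Set.mem_insert_iff, Set.mem_singleton_iff] at hg
          rcases hg with rfl | rfl | rfl <;>
            simp [SetLike.mem_coe, Submodule.mem_inf, LinearMap.mem_ker, Matrix.vecHead, Matrix.vecTail, L2e2, Le1pe2, L2e1]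
        · refine Submodule.span_le.mpr ?_
          rintro g hg
          simp only [Set.mem_insert_iff, Set.mem_singleton_iff] at hg
          rcases hg with rfl | rfl | rfl <;>
            simp [SetLike.mem_coe, Submodule.mem_inf, LinearMap.mem_ker, Matrix.vecHead, Matrix.vecTail, Lm2e1, Lme1me2, Lm2e2]
      rw [Submodule.disjoint_def]
      intro X hX1 hX2
      have hk := hsup hX2
      replace hX1 : X ∈ Submodule.span ℂ {Lme1pe2, Dpm, Le1me2} := hX1
      rw [mem_span_triple] at hX1
      obtain ⟨p, q, r, rfl⟩ := hX1
      simp only [Submodule.mem_inf, LinearMap.mem_ker, LinearMap.sub_apply, ev_apply,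
        Matrix.add_apply, Matrix.smul_apply, Lme1pe2, Dpm, Le1me2] at hk
      obtain ⟨⟨hp, hr⟩, hq⟩ := hk
      simp [Matrix.vecHead, Matrix.vecTail] at hp hr hq
      rw [hp, hr, hq]
      simp
    · -- i = 2
      have hsup : (⨆ (j) (_ : j ≠ (2 : Fin 4)), V j) ≤
          LinearMap.ker (ev 1 2) ⊓ LinearMap.ker (ev 0 2) ⊓ LinearMap.ker (ev 0 3) := by
        refine iSup_le fun j => iSup_le fun hj => ?_
        fin_cases j
        · refine Submodule.span_le.mpr ?_
          rintro g hg
          simp only [Set.mem_singleton_iff] at hg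
          subst hg
          simp [SetLike.mem_coe, Submodule.mem_inf, LinearMap.mem_ker, Matrix.vecHead, Matrix.vecTail, Dpp]
        · refine Submodule.span_le.mpr ?_
          rintro g hg
          simp only [Set.mem_insert_iff, Set.mem_singleton_iff] at hg
          rcases hg with rfl | rfl | rfl <;>
            simp [SetLike.mem_coe, Submodule.mem_inf, LinearMap.mem_ker, Matrix.vecHead, Matrix.vecTail, Lme1pe2, Dpm, Le1me2]
        · exact absurd rfl hj
        · refine Submodule.span_le.mpr ?_
          rintro g hg
          simp only [Set.mem_insert_iff, Set.mem_singleton_iff] at hg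
          rcases hg with rfl | rfl | rfl <;>
            simp [SetLike.mem_coe, Submodule.mem_inf, LinearMap.mem_ker, Matrix.vecHead, Matrix.vecTail, Lm2e1, Lme1me2, Lm2e2]
      rw [Submodule.disjoint_def]
      intro X hX1 hX2
      have hk := hsup hX2
      replace hX1 : X ∈ Submodule.span ℂ {L2e2, Le1pe2, L2e1} := hX1
      rw [mem_span_triple] at hX1
      obtain ⟨p, q, r, rfl⟩ := hX1
      simp only [Submodule.mem_inf, LinearMap.mem_ker, ev_apply,
        Matrix.add_apply, Matrix.smul_apply, L2e2, Le1pe2, L2e1] at hk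
      obtain ⟨⟨hp, hq⟩, hr⟩ := hk
      simp [Matrix.vecHead, Matrix.vecTail] at hp hq hr
      rw [hp, hq, hr]
      simp
    · -- i = 3
      have hsup : (⨆ (j) (_ : j ≠ (3 : Fin 4)), V j) ≤
          LinearMap.ker (ev 3 0) ⊓ LinearMap.ker (ev 2 0) ⊓ LinearMap.ker (ev 2 1) := by
        refine iSup_le fun j => iSup_le fun hj => ?_
        fin_cases j
        · refine Submodule.span_le.mpr ?_
          rintro g hg
          simp only [Set.mem_singleton_iff] at hg
          subst hg
          simp [SetLike.mem_coe, Submodule.mem_inf, LinearMap.mem_ker, Matrix.vecHead, Matrix.vecTail, Dpp]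
        · refine Submodule.span_le.mpr ?_
          rintro g hg
          simp only [Set.mem_insert_iff, Set.mem_singleton_iff] at hg
          rcases hg with rfl | rfl | rfl <;>
            simp [SetLike.mem_coe, Submodule.mem_inf, LinearMap.mem_ker, Matrix.vecHead, Matrix.vecTail, Lme1pe2, Dpm, Le1me2]
        · refine Submodule.span_le.mpr ?_
          rintro g hg
          simp only [Set.mem_insert_iff, Set.mem_singleton_iff] at hg
          rcases hg with rfl | rfl | rfl <;>
            simp [SetLike.mem_coe, Submodule.mem_inf, LinearMap.mem_ker, Matrix.vecHead, Matrix.vecTail, L2e2, Le1pe2, L2e1]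
        · exact absurd rfl hj
      rw [Submodule.disjoint_def]
      intro X hX1 hX2
      have hk := hsup hX2
      replace hX1 : X ∈ Submodule.span ℂ {Lm2e1, Lme1me2, Lm2e2} := hX1
      rw [mem_span_triple] at hX1
      obtain ⟨p, q, r, rfl⟩ := hX1
      simp only [Submodule.mem_inf, LinearMap.mem_ker, ev_apply,
        Matrix.add_apply, Matrix.smul_apply, Lm2e1, Lme1me2, Lm2e2] at hk
      obtain ⟨⟨hp, hq⟩, hr⟩ := hk
      simp [Matrix.vecHead, Matrix.vecTail] at hp hq hr
      rw [hp, hq, hr]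
      simp
  · -- sup = sp4
    have hle : (⨆ i, V i) ≤ sp4M := by
      refine iSup_le fun k => ?_
      fin_cases k
      · refine Submodule.span_le.mpr ?_
        rintro g hg
        simp only [Set.mem_singleton_iff] at hg
        subst hg
        rw [SetLike.mem_coe, mem_sp4M, mem_sp4_iff]
        simp [Dpp]
      · refine Submodule.span_le.mpr ?_
        rintro g hg
        simp only [Set.mem_insert_iff, Set.mem_singleton_iff] at hg
        rcases hg with rfl | rfl | rfl <;>
          · rw [SetLike.mem_coe, mem_sp4M, mem_sp4_iff]
            simp [Lme1pe2, Dpm, Le1me2]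
      · refine Submodule.span_le.mpr ?_
        rintro g hg
        simp only [Set.mem_insert_iff, Set.mem_singleton_iff] at hg
        rcases hg with rfl | rfl | rfl <;>
          · rw [SetLike.mem_coe, mem_sp4M, mem_sp4_iff]
            simp [L2e2, Le1pe2, L2e1]
      · refine Submodule.span_le.mpr ?_
        rintro g hg
        simp only [Set.mem_insert_iff, Set.mem_singleton_iff] at hg
        rcases hg with rfl | rfl | rfl <;>
          · rw [SetLike.mem_coe, mem_sp4M, mem_sp4_iff]
            simp [Lm2e1, Lme1me2, Lm2e2]
    ext X
    simp only [SetLike.mem_coe]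
    constructor
    · intro hX
      exact hle hX
    · intro hX
      rw [mem_sp4_iff] at hX
      obtain ⟨h1, h2, h3, h4, h5, h6⟩ := hX
      have hdecomp : X = ((X 0 0 + X 1 1)/2) • Dpp
          + ((X 1 0) • Lme1pe2 + ((X 0 0 - X 1 1)/2) • Dpm + (X 0 1) • Le1me2)
          + ((X 1 2) • L2e2 + (X 0 2) • Le1pe2 + (X 0 3) • L2e1)
          + ((X 3 0) • Lm2e1 + (X 2 0) • Lme1me2 + (X 2 1) • Lm2e2) := by
        simp only [Dpp, Lme1pe2, Dpm, Le1me2, L2e2, Le1pe2, L2e1, Lm2e1, Lme1me2, Lm2e2]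
        simp only [smul4, add4]
        conv_lhs => rw [eta4 X]
        rw [eq4]
        exact ⟨by ring, by ring, by ring, by ring, by ring, by ring, by ring,
          by linear_combination h6, by ring, by ring, by linear_combination h2,
          by linear_combination h5, by ring, by linear_combination h3,
          by linear_combination h4, by linear_combination h1⟩
      rw [hdecomp]
      refine add_mem (add_mem (add_mem ?_ ?_) ?_) ?_
      · exact Submodule.mem_iSup_of_mem 0 (by
          rw [hV0]
          exact Submodule.smul_mem _ _ (Submodule.subset_span rfl))
      · exact Submodule.mem_iSup_of_mem 1 (by rw [hV1]; exact triple_mem _ _ _ _ _ _)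
      · exact Submodule.mem_iSup_of_mem 2 (by rw [hV2]; exact triple_mem _ _ _ _ _ _)
      · exact Submodule.mem_iSup_of_mem 3 (by rw [hV3]; exact triple_mem _ _ _ _ _ _)
end

section
/- Let S be a symmetric invertible 2×2 complex matrix, and set B = w·S. Then the solution space {A ∈ M₂(ℂ) : A·B = −B·w·Aᵀ·w} is one-dimensional over ℂ; it is spanned by A₀ = w·S·diag(−1,1). -/
open Matrix

/-- For `S` symmetric invertible and `B = w·S`, the solution space
`{A : A·B = −B·w·Aᵀ·w}` is one-dimensional, spanned by `A₀ = w·S·diag(−1,1)`. -/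
theorem stmt15 (S : Matrix (Fin 2) (Fin 2) ℂ) (hS : Sᵀ = S) (hS' : IsUnit S.det) :
    let B : Matrix (Fin 2) (Fin 2) ℂ := w2 * S
    let A₀ : Matrix (Fin 2) (Fin 2) ℂ := w2 * S * !![(-1 : ℂ), 0; 0, 1]
    {A : Matrix (Fin 2) (Fin 2) ℂ | A * B = -(B * w2 * Aᵀ * w2)} =
      ↑(Submodule.span ℂ ({A₀} : Set (Matrix (Fin 2) (Fin 2) ℂ))) ∧
    Module.finrank ℂ ↥(Submodule.span ℂ ({A₀} : Set (Matrix (Fin 2) (Fin 2) ℂ))) = 1 := by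
  intro B A₀
  have hb : S 1 0 = S 0 1 := congrFun (congrFun hS 0) 1
  have hdet : S 0 0 * S 1 1 - S 0 1 * S 0 1 ≠ 0 := by
    have h := hS'.ne_zero
    rw [Matrix.det_fin_two, hb] at h
    exact h
  have htr : ∀ p q r s : ℂ, (!![p,q;r,s])ᵀ = !![p,r;q,s] := by
    intro p q r s; ext i j; fin_cases i <;> fin_cases j <;> rfl
  have hA0 : A₀ = !![-(S 0 1), S 1 1; -(S 0 0), S 0 1] := by
    show w2 * S * _ = _
    rw [Matrix.eta_fin_two S]
    simp [w2, Matrix.mul_fin_two, hb]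
  have hsmul : ∀ t : ℂ, t • A₀ = !![-(t * S 0 1), t * S 1 1; -(t * S 0 0), t * S 0 1] := by
    intro t
    rw [hA0]
    ext i j; fin_cases i <;> fin_cases j <;> simp [mul_comm]
  constructor
  · ext A
    simp only [Set.mem_setOf_eq, SetLike.mem_coe, Submodule.mem_span_singleton]
    constructor
    · intro h
      replace h : A * (w2 * S) = -(w2 * S * w2 * Aᵀ * w2) := h
      rw [Matrix.eta_fin_two S, Matrix.eta_fin_two A, htr] at h
      simp only [w2, Matrix.mul_fin_two, ← Matrix.ext_iff, Fin.forall_fin_two,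
        Matrix.neg_apply, Matrix.cons_val', Matrix.cons_val_zero, Matrix.cons_val_one,
        Matrix.head_cons, Matrix.empty_val', Matrix.cons_val_fin_one, Matrix.head_fin_const,
        Matrix.of_apply] at h
      obtain ⟨⟨h00, h01⟩, h10, h11⟩ := h
      rw [hb] at h00 h01 h10 h11
      ring_nf at h00 h01 h10 h11
      refine ⟨(A 0 0 * S 0 1 + A 0 1 * S 0 0) / (S 0 0 * S 1 1 - S 0 1 * S 0 1), ?_⟩
      rw [hsmul, Matrix.eta_fin_two A]
      simp only [← Matrix.ext_iff, Fin.forall_fin_two, Matrix.cons_val', Matrix.cons_val_zero,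
        Matrix.cons_val_one, Matrix.head_cons, Matrix.empty_val', Matrix.cons_val_fin_one,
        Matrix.head_fin_const, Matrix.of_apply]
      refine ⟨⟨?_, ?_⟩, ?_, ?_⟩ <;> field_simp [show S 0 0 * S 1 1 - S 0 1 ^ 2 ≠ 0 by rwa [sq]]
      · linear_combination (-(S 0 0)/2) * h01
      · linear_combination (S 0 1/2) * h01
      · linear_combination (-(S 0 0)) * h00 + (S 0 1/2) * h10
      · linear_combination (S 0 1) * h00 + (-(S 1 1)/2) * h10
    · rintro ⟨t, rfl⟩
      show (t • A₀) * (w2 * S) = -(w2 * S * w2 * (t • A₀)ᵀ * w2)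
      rw [hsmul, Matrix.eta_fin_two S, htr, hb]
      simp only [w2, Matrix.mul_fin_two, ← Matrix.ext_iff, Fin.forall_fin_two,
        Matrix.neg_apply, Matrix.cons_val', Matrix.cons_val_zero, Matrix.cons_val_one,
        Matrix.head_cons, Matrix.empty_val', Matrix.cons_val_fin_one, Matrix.head_fin_const,
        Matrix.of_apply]
      refine ⟨⟨?_, ?_⟩, ?_, ?_⟩ <;> ring
  · have hne : A₀ ≠ 0 := by
      rw [hA0]
      intro h0
      have e1 := congrFun (congrFun h0 1) 0
      have e2 := congrFun (congrFun h0 0) 1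
      have e3 := congrFun (congrFun h0 1) 1
      simp at e1 e2 e3
      apply hdet
      rw [e1, e2, e3]
      ring
    rw [finrank_span_singleton hne]
end

section
/- Let S be a symmetric invertible 2×2 complex matrix, set B = w·S, and let N be the 4×4 block matrix [[0, B],[0, 0]]. Then the linear map sending a 2×2 complex matrix A to the commutator N·X_A − X_A·N, where X_A is the block-diagonal matrix [[A, 0],[0, −w·Aᵀ·w]] ∈ sp(4,ℂ), takes values in the 3-dimensional space of matrices of the form [[0, Y],[0, 0]] with w·Y symmetric, and it is surjective onto that space. -/
open Matrix

/-- The 4×4 matrix with 2×2 blocks `[[A,B],[C,D]]`. -/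
def blk (A B C D : Matrix (Fin 2) (Fin 2) ℂ) : Matrix (Fin 4) (Fin 4) ℂ :=
  Matrix.reindex finSumFinEquiv finSumFinEquiv (Matrix.fromBlocks A B C D)

/-!
With `X_A = diag(A, D)` and `N = [[0, B], [0, 0]]`, the commutator `N X_A - X_A N` is
`[[0, B D - A B], [0, 0]]`. For `B = w S` and `D = -w Aᵀ w`, the relations `w² = 1`, `wᵀ = w` and
`Sᵀ = S` give `w (B D - A B) = -(M + Mᵀ)` with `M = w A w S`, so `w Y` is symmetric. Conversely
`A ↦ w A w S` is bijective when `S` is invertible, so taking `M = -Z / 2` reaches every symmetric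
`Z = w Y`. The space `{Y | w Y symmetric} = {Y | Y₀₀ = Y₁₁}` is the kernel of a nonzero
functional on the 4-dimensional space of `2 × 2` matrices.
-/

section Involution

variable {n R : Type*} [Fintype n] [DecidableEq n] [CommRing R] {w : Matrix n n R}

lemma mul_sub_eq_neg_transpose_add (hw : w * w = 1) (hwT : wᵀ = w) {S : Matrix n n R}
    (hS : Sᵀ = S) (A : Matrix n n R) :
    w * (w * S * -(w * Aᵀ * w) - A * (w * S)) = -((w * A * w * S)ᵀ + w * A * w * S) := by
  have hw' : ∀ X : Matrix n n R, w * (w * X) = X := fun X => by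
    rw [← Matrix.mul_assoc, hw, Matrix.one_mul]
  simp only [transpose_mul, hS, hwT, Matrix.mul_sub, Matrix.mul_neg, Matrix.mul_assoc, hw']
  abel

lemma exists_mul_mul_mul_eq (hw : w * w = 1) {S : Matrix n n R} (hS : IsUnit S.det)
    (M : Matrix n n R) : ∃ A, w * A * w * S = M :=
  ⟨w * M * S⁻¹ * w, by
    simp only [Matrix.mul_assoc, nonsing_inv_mul S hS, Matrix.mul_one, hw]
    rw [← Matrix.mul_assoc, hw, Matrix.one_mul]⟩

end Involution

lemma w2_mul_self : w2 * w2 = 1 := by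
  ext i j; fin_cases i <;> fin_cases j <;> simp [w2, Matrix.mul_apply, Fin.sum_univ_succ]

lemma w2_mul_w2_mul (X : Matrix (Fin 2) (Fin 2) ℂ) : w2 * (w2 * X) = X := by
  rw [← Matrix.mul_assoc, w2_mul_self, Matrix.one_mul]

lemma w2_transpose : w2ᵀ = w2 := by
  ext i j; fin_cases i <;> fin_cases j <;> rfl

lemma blk_mul (A B C D A' B' C' D' : Matrix (Fin 2) (Fin 2) ℂ) :
    blk A B C D * blk A' B' C' D' =
      blk (A * A' + B * C') (A * B' + B * D') (C * A' + D * C') (C * B' + D * D') := by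
  simp only [blk, reindex_apply, submatrix_mul_equiv, fromBlocks_multiply]

lemma blk_transpose (A B C D : Matrix (Fin 2) (Fin 2) ℂ) :
    (blk A B C D)ᵀ = blk Aᵀ Cᵀ Bᵀ Dᵀ := by
  simp only [blk, reindex_apply, transpose_submatrix, fromBlocks_transpose]

lemma blk_add (A B C D A' B' C' D' : Matrix (Fin 2) (Fin 2) ℂ) :
    blk A B C D + blk A' B' C' D' = blk (A + A') (B + B') (C + C') (D + D') := by
  simp only [blk, ← coe_reindexLinearEquiv ℂ ℂ, ← map_add, fromBlocks_add]

lemma blk_sub (A B C D A' B' C' D' : Matrix (Fin 2) (Fin 2) ℂ) :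
    blk A B C D - blk A' B' C' D' = blk (A - A') (B - B') (C - C') (D - D') := by
  simp only [blk, ← coe_reindexLinearEquiv ℂ ℂ, ← map_sub]
  congr 1
  ext (i | i) (j | j) <;> rfl

lemma blk_zero : blk 0 0 0 0 = 0 := by
  simp [blk]

lemma J4_eq_blk : J4 = blk 0 w2 (-w2) 0 := by
  ext i j
  fin_cases i <;> fin_cases j <;> simp [J4, blk, w2, finSumFinEquiv, fromBlocks] <;> rfl

lemma blk_mem_sp4 (A : Matrix (Fin 2) (Fin 2) ℂ) : blk A 0 0 (-(w2 * Aᵀ * w2)) ∈ sp4 := by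
  change _ + _ = _
  rw [blk_transpose, J4_eq_blk, blk_mul, blk_mul, blk_add, ← blk_zero]
  congr 1 <;> simp [Matrix.mul_assoc, w2_mul_self, w2_transpose, transpose_mul,
    ← Matrix.mul_assoc w2 w2]

lemma blk_upper_mul_blk_diag_sub (A B D : Matrix (Fin 2) (Fin 2) ℂ) :
    blk 0 B 0 0 * blk A 0 0 D - blk A 0 0 D * blk 0 B 0 0 = blk 0 (B * D - A * B) 0 0 := by
  rw [blk_mul, blk_mul, blk_sub]
  simp

lemma setOf_transpose_w2_mul_eq_ker :
    {Y : Matrix (Fin 2) (Fin 2) ℂ | (w2 * Y)ᵀ = w2 * Y} =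
      LinearMap.ker (entryLinearMap ℂ ℂ (0 : Fin 2) (0 : Fin 2) - entryLinearMap ℂ ℂ 1 1) := by
  ext Y
  simp only [Set.mem_ofPred_eq, SetLike.mem_coe, LinearMap.mem_ker, LinearMap.sub_apply,
    entryLinearMap_apply, sub_eq_zero, ← Matrix.ext_iff, Fin.forall_fin_two]
  simp [w2, Matrix.mul_apply, Fin.sum_univ_succ, vecMul, dotProduct, eq_comm]

lemma finrank_span_setOf_transpose_w2_mul :
    Module.finrank ℂ (Submodule.span ℂ {Y : Matrix (Fin 2) (Fin 2) ℂ | (w2 * Y)ᵀ = w2 * Y}) = 3 := by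
  rw [setOf_transpose_w2_mul_eq_ker, Submodule.span_eq]
  have hf : entryLinearMap ℂ ℂ (0 : Fin 2) (0 : Fin 2) - entryLinearMap ℂ ℂ 1 1 ≠ 0 := fun h => by
    simpa using LinearMap.congr_fun h (single 0 0 1)
  have := Module.Dual.finrank_ker_add_one_of_ne_zero hf
  rw [Module.finrank_matrix, Module.finrank_self, Fintype.card_fin] at this
  omega

/-- For `N = [[0,B],[0,0]]` with `B = w·S`, `S` symmetric invertible, the map
`A ↦ [N, X_A]`, where `X_A = diag(A, −w·Aᵀ·w) ∈ sp(4,ℂ)`, takes values in the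
3-dimensional space of matrices `[[0,Y],[0,0]]` with `w·Y` symmetric, and is
surjective onto it. -/
theorem stmt16 (S : Matrix (Fin 2) (Fin 2) ℂ) (hS : Sᵀ = S) (hS' : IsUnit S.det) :
    let B : Matrix (Fin 2) (Fin 2) ℂ := w2 * S
    let N : Matrix (Fin 4) (Fin 4) ℂ := blk 0 B 0 0
    let XA : Matrix (Fin 2) (Fin 2) ℂ → Matrix (Fin 4) (Fin 4) ℂ :=
      fun A => blk A 0 0 (-(w2 * Aᵀ * w2))
    (∀ A : Matrix (Fin 2) (Fin 2) ℂ, XA A ∈ sp4) ∧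
    (∀ A : Matrix (Fin 2) (Fin 2) ℂ, ∃ Y : Matrix (Fin 2) (Fin 2) ℂ,
      (w2 * Y)ᵀ = w2 * Y ∧ N * XA A - XA A * N = blk 0 Y 0 0) ∧
    (∀ Y : Matrix (Fin 2) (Fin 2) ℂ, (w2 * Y)ᵀ = w2 * Y →
      ∃ A : Matrix (Fin 2) (Fin 2) ℂ, N * XA A - XA A * N = blk 0 Y 0 0) ∧
    Module.finrank ℂ ↥(Submodule.span ℂ
      {Y : Matrix (Fin 2) (Fin 2) ℂ | (w2 * Y)ᵀ = w2 * Y}) = 3 := by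
  intro B N XA
  have hw2Y := mul_sub_eq_neg_transpose_add w2_mul_self w2_transpose hS
  refine ⟨blk_mem_sp4, fun A => ⟨_, ?_, blk_upper_mul_blk_diag_sub _ _ _⟩, fun Y hY => ?_,
    finrank_span_setOf_transpose_w2_mul⟩
  · rw [hw2Y, transpose_neg, transpose_add, transpose_transpose, add_comm]
  · obtain ⟨A, hA⟩ := exists_mul_mul_mul_eq w2_mul_self hS' (-(1 / 2 : ℂ) • (w2 * Y))
    refine ⟨A, (blk_upper_mul_blk_diag_sub _ _ _).trans (congrArg (blk 0 · 0 0) ?_)⟩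
    have hsymm : -((-(1 / 2 : ℂ) • (w2 * Y))ᵀ + -(1 / 2 : ℂ) • (w2 * Y)) = w2 * Y := by
      rw [transpose_smul, hY]
      module
    rw [← w2_mul_w2_mul (_ - _), hw2Y, hA, hsymm, w2_mul_w2_mul]
end
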